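/- Let G be a finite weighted graph with symmetric nonnegative weights w and positive degrees d i = ∑ j w i j. For a nonempty proper subset S of vertices, define the conductance φ(S) = (∑_{i ∈ S, j ∉ S} w i j) / (∑_{i ∈ S} d i). If λ₂ is the second smallest eigenvalue of the normalized Laplacian, then λ₂/2 ≤ φ(S) for every S with vol(S) ≤ vol(V)/2 implies λ₂/2 ≤ φ(G), where φ(G) is the minimum conductance over such S. Prove the easy direction of Cheeger's inequality: λ₂ ≤ 2 φ(G). -/

import Mathlib

/-!
The normalized Laplacian `L` is positive semidefinite with `D^{1/2} 𝟙` in its kernel, so by the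
spectral theorem `λ₂ ‖x‖² ≤ xᵀ L x` for every `x ⟂ D^{1/2} 𝟙`. Test this with `x = D^{1/2} y`,
where `y = 1 / vol S` on `S` and `y = -1 / vol Sᶜ` on `Sᶜ`: then `x ⟂ D^{1/2} 𝟙`,
`‖x‖² = 1 / vol S + 1 / vol Sᶜ` and `xᵀ L x = ½ ∑ wᵢⱼ (yᵢ - yⱼ)² = (1 / vol S + 1 / vol Sᶜ)² cut S`,
so `λ₂ ≤ (1 / vol S + 1 / vol Sᶜ) cut S ≤ 2 cut S / vol S` because `vol S ≤ vol Sᶜ`.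
-/

open Matrix

lemma rpow_neg_one_div_two_eq_inv_sqrt {a : ℝ} (ha : 0 ≤ a) : a ^ (-(1 : ℝ) / 2) = (√a)⁻¹ := by
  rw [Real.sqrt_eq_rpow, ← Real.rpow_neg ha, neg_div]

namespace Matrix.IsHermitian

variable {ι : Type*} [Fintype ι] [DecidableEq ι] {A : Matrix ι ι ℝ} (hA : A.IsHermitian)

lemma dotProduct_eq_sum_eigenvectorBasis (x y : ι → ℝ) :
    x ⬝ᵥ y = ∑ i, (⇑(hA.eigenvectorBasis i) ⬝ᵥ x) * (⇑(hA.eigenvectorBasis i) ⬝ᵥ y) := by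
  simpa [EuclideanSpace.inner_eq_star_dotProduct, dotProduct_comm y] using
    (hA.eigenvectorBasis.sum_inner_mul_inner (WithLp.toLp 2 x) (WithLp.toLp 2 y)).symm

lemma eigenvectorBasis_dotProduct_mulVec (x : ι → ℝ) (i : ι) :
    ⇑(hA.eigenvectorBasis i) ⬝ᵥ A *ᵥ x = hA.eigenvalues i * (⇑(hA.eigenvectorBasis i) ⬝ᵥ x) := by
  rw [dotProduct_mulVec, ← mulVec_transpose, ← conjTranspose_eq_transpose_of_trivial, hA.eq,
    mulVec_eigenvectorBasis, smul_dotProduct, smul_eq_mul]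

lemma dotProduct_self_eq_sum_sq (x : ι → ℝ) :
    x ⬝ᵥ x = ∑ i, (⇑(hA.eigenvectorBasis i) ⬝ᵥ x) ^ 2 := by
  simp only [hA.dotProduct_eq_sum_eigenvectorBasis x, sq]

lemma dotProduct_mulVec_eq_sum_eigenvalues_mul_sq (x : ι → ℝ) :
    x ⬝ᵥ A *ᵥ x = ∑ i, hA.eigenvalues i * (⇑(hA.eigenvectorBasis i) ⬝ᵥ x) ^ 2 := by
  simp only [hA.dotProduct_eq_sum_eigenvectorBasis x, eigenvectorBasis_dotProduct_mulVec]
  exact Finset.sum_congr rfl fun i _ => by ring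

end Matrix.IsHermitian

theorem Matrix.PosSemidef.mul_dotProduct_self_le_of_dotProduct_eq_zero {ι : Type*} [Fintype ι]
    [DecidableEq ι] {A : Matrix ι ι ℝ} (hA : A.PosSemidef) {v x : ι → ℝ} (hv : v ≠ 0)
    (hAv : A *ᵥ v = 0) (hvx : v ⬝ᵥ x = 0) {μ : ℝ} (i₀ : ι)
    (hμ : ∀ i ≠ i₀, μ ≤ hA.1.eigenvalues i) :
    μ * (x ⬝ᵥ x) ≤ x ⬝ᵥ A *ᵥ x := by
  have hxAx : 0 ≤ x ⬝ᵥ A *ᵥ x := by simpa using hA.dotProduct_mulVec_nonneg x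
  rcases le_or_gt μ 0 with hμ0 | hμ0
  · have hxx : 0 ≤ x ⬝ᵥ x := by simpa using dotProduct_star_self_nonneg x
    exact (mul_nonpos_of_nonpos_of_nonneg hμ0 hxx).trans hxAx
  set U := hA.1.eigenvectorBasis
  -- All eigenvalues but the `i₀`-th are positive, so the null vector `v` spans the `i₀`-th
  -- eigenline, and `x ⟂ v` has no component along it.
  have hUv : ∀ i ≠ i₀, ⇑(U i) ⬝ᵥ v = 0 := fun i hi => by
    have := hA.1.eigenvectorBasis_dotProduct_mulVec v i
    rw [hAv, dotProduct_zero, eq_comm, mul_eq_zero] at this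
    exact this.resolve_left (hμ0.trans_le (hμ i hi)).ne'
  have hUv₀ : ⇑(U i₀) ⬝ᵥ v ≠ 0 := fun h => hv <| dotProduct_self_eq_zero.1 <| by
    rw [hA.1.dotProduct_self_eq_sum_sq]
    refine Finset.sum_eq_zero fun i _ => ?_
    rcases eq_or_ne i i₀ with rfl | hi
    · simp [U, h]
    · simp [U, hUv i hi]
  have hUx₀ : ⇑(U i₀) ⬝ᵥ x = 0 := by
    rw [hA.1.dotProduct_eq_sum_eigenvectorBasis, Finset.sum_eq_single i₀
      (fun i _ hi => by simp [U, hUv i hi]) (by simp)] at hvx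
    exact (mul_eq_zero.1 hvx).resolve_left hUv₀
  rw [hA.1.dotProduct_self_eq_sum_sq, hA.1.dotProduct_mulVec_eq_sum_eigenvalues_mul_sq,
    Finset.mul_sum]
  refine Finset.sum_le_sum fun i _ => ?_
  rcases eq_or_ne i i₀ with rfl | hi
  · simp [U, hUx₀]
  · exact mul_le_mul_of_nonneg_right (hμ i hi) (sq_nonneg _)

namespace WeightedGraph

variable {ι : Type*} [Fintype ι]

section Definitions

variable (w : Matrix ι ι ℝ)

def degree (i : ι) : ℝ := ∑ j, w i j

noncomputable def sqrtDegree : ι → ℝ := fun i => √(degree w i)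

def vol (S : Finset ι) : ℝ := ∑ i ∈ S, degree w i

variable [DecidableEq ι]

def cut (S : Finset ι) : ℝ := ∑ i ∈ S, ∑ j ∈ Sᶜ, w i j

noncomputable def conductance (S : Finset ι) : ℝ := cut w S / vol w S

noncomputable def normalizedLaplacian : Matrix ι ι ℝ :=
  1 - diagonal (fun i => degree w i ^ (-(1 : ℝ) / 2)) * w *
    diagonal (fun i => degree w i ^ (-(1 : ℝ) / 2))

end Definitions

variable {w : Matrix ι ι ℝ}

lemma sum_sum_mul_sq_sub (hw : w.IsSymm) (y : ι → ℝ) :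
    ∑ i, ∑ j, w i j * (y i - y j) ^ 2 = 2 * ∑ i, ∑ j, w i j * (y i ^ 2 - y i * y j) := by
  have hswap : ∑ i, ∑ j, w i j * (y j ^ 2 - y j * y i) =
      ∑ i, ∑ j, w i j * (y i ^ 2 - y i * y j) := by
    rw [Finset.sum_comm]
    simp only [hw.apply]
  rw [two_mul]
  nth_rewrite 2 [← hswap]
  simp only [← Finset.sum_add_distrib]
  exact Finset.sum_congr rfl fun i _ => Finset.sum_congr rfl fun j _ => by ring

lemma sqrtDegree_mul_dotProduct (hdeg : ∀ i, 0 ≤ degree w i) (u y : ι → ℝ) :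
    (sqrtDegree w * u) ⬝ᵥ (sqrtDegree w * y) = ∑ i, degree w i * (u i * y i) := by
  refine Finset.sum_congr rfl fun i _ => ?_
  simp only [Pi.mul_apply, sqrtDegree]
  linear_combination u i * y i * Real.mul_self_sqrt (hdeg i)

lemma sqrtDegree_ne_zero [Nonempty ι] (hdeg : ∀ i, 0 < degree w i) : sqrtDegree w ≠ 0 :=
  fun h => by
    obtain ⟨i⟩ := ‹Nonempty ι›
    exact (Real.sqrt_pos.2 (hdeg i)).ne' (congrFun h i)

lemma sqrtDegree_dotProduct (hdeg : ∀ i, 0 ≤ degree w i) (y : ι → ℝ) :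
    sqrtDegree w ⬝ᵥ (sqrtDegree w * y) = ∑ i, degree w i * y i := by
  simpa using sqrtDegree_mul_dotProduct hdeg 1 y

lemma vol_pos (hdeg : ∀ i, 0 < degree w i) {S : Finset ι} (hS : S.Nonempty) : 0 < vol w S :=
  Finset.sum_pos (fun i _ => hdeg i) hS

variable [DecidableEq ι]

lemma sum_degree_mul_ite (S : Finset ι) (α β : ℝ) :
    ∑ i, degree w i * (if i ∈ S then α else β) = α * vol w S + β * vol w Sᶜ := by
  rw [← Finset.sum_add_sum_compl S, vol, vol, Finset.mul_sum, Finset.mul_sum]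
  congr 1 <;> refine Finset.sum_congr rfl fun i hi => ?_ <;> simp_all [mul_comm]

lemma sum_sum_mul_sq_sub_ite (S : Finset ι) (α β : ℝ) :
    ∑ i, ∑ j, w i j * ((if i ∈ S then α else β) - (if j ∈ S then α else β)) ^ 2 =
      (α - β) ^ 2 * (cut w S + cut w Sᶜ) := by
  have h : ∀ i j, w i j * ((if i ∈ S then α else β) - (if j ∈ S then α else β)) ^ 2 =
      (α - β) ^ 2 * ((if i ∈ S then (if j ∈ Sᶜ then w i j else 0) else 0) +
        (if i ∈ Sᶜ then (if j ∈ Sᶜᶜ then w i j else 0) else 0)) := by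
    intro i j
    by_cases hi : i ∈ S <;> by_cases hj : j ∈ S <;> simp [hi, hj] <;> ring
  simp only [h, ← Finset.mul_sum, Finset.sum_add_distrib, ← Finset.ite_sum_zero,
    Finset.sum_ite_mem_eq, cut]

lemma cut_compl (hw : w.IsSymm) (S : Finset ι) : cut w Sᶜ = cut w S := by
  simp only [cut, compl_compl]
  exact Finset.sum_comm.trans (by simp only [hw.apply])

lemma cut_nonneg (hnn : ∀ i j, 0 ≤ w i j) (S : Finset ι) : 0 ≤ cut w S :=
  Finset.sum_nonneg fun i _ => Finset.sum_nonneg fun j _ => hnn i j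

lemma isHermitian_normalizedLaplacian (hw : w.IsSymm) : (normalizedLaplacian w).IsHermitian := by
  simp [IsHermitian, normalizedLaplacian, hw.eq, Matrix.mul_assoc]

lemma normalizedLaplacian_mulVec_apply (hdeg : ∀ i, 0 < degree w i) (z : ι → ℝ) (i : ι) :
    (normalizedLaplacian w *ᵥ z) i =
      z i - (√(degree w i))⁻¹ * ∑ j, w i j * ((√(degree w j))⁻¹ * z j) := by
  simp only [normalizedLaplacian, rpow_neg_one_div_two_eq_inv_sqrt (hdeg _).le, sub_mulVec,
    one_mulVec, ← mulVec_mulVec, Pi.sub_apply, mulVec_diagonal]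
  congr 2
  exact Finset.sum_congr rfl fun j _ => congrArg _ (mulVec_diagonal _ _ j)

lemma normalizedLaplacian_mulVec_sqrtDegree (hdeg : ∀ i, 0 < degree w i) :
    normalizedLaplacian w *ᵥ sqrtDegree w = 0 := by
  ext i
  have hsqrt := Real.sqrt_pos.2 (hdeg i)
  rw [normalizedLaplacian_mulVec_apply hdeg, Pi.zero_apply, sub_eq_zero]
  simp only [sqrtDegree, inv_mul_cancel₀ (Real.sqrt_pos.2 (hdeg _)).ne', mul_one]
  change _ = _ * degree w i
  field_simp
  exact Real.sq_sqrt (hdeg i).le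

lemma sqrtDegree_mul_dotProduct_normalizedLaplacian_mulVec (hdeg : ∀ i, 0 < degree w i)
    (hw : w.IsSymm) (y : ι → ℝ) :
    (sqrtDegree w * y) ⬝ᵥ normalizedLaplacian w *ᵥ (sqrtDegree w * y) =
      (∑ i, ∑ j, w i j * (y i - y j) ^ 2) / 2 := by
  rw [sum_sum_mul_sq_sub hw, mul_div_cancel_left₀ _ two_ne_zero]
  simp only [dotProduct, normalizedLaplacian_mulVec_apply hdeg, Pi.mul_apply, sqrtDegree,
    inv_mul_cancel_left₀ (Real.sqrt_pos.2 (hdeg _)).ne']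
  refine Finset.sum_congr rfl fun i _ => ?_
  have hrow : ∑ j, w i j * (y i ^ 2 - y i * y j) =
      degree w i * y i ^ 2 - y i * ∑ j, w i j * y j := by
    rw [degree, Finset.sum_mul, Finset.mul_sum, ← Finset.sum_sub_distrib]
    exact Finset.sum_congr rfl fun j _ => by ring
  have hsqrt := Real.sqrt_pos.2 (hdeg i)
  rw [hrow]
  field_simp
  rw [Real.sq_sqrt (hdeg i).le]
  ring

lemma posSemidef_normalizedLaplacian (hdeg : ∀ i, 0 < degree w i) (hw : w.IsSymm)
    (hnn : ∀ i j, 0 ≤ w i j) : (normalizedLaplacian w).PosSemidef := by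
  refine .of_dotProduct_mulVec_nonneg (isHermitian_normalizedLaplacian hw) fun z => ?_
  have hz : z = sqrtDegree w * ((sqrtDegree w)⁻¹ * z) := by
    ext i
    exact (mul_inv_cancel_left₀ (Real.sqrt_pos.2 (hdeg i)).ne' _).symm
  rw [star_trivial, hz, sqrtDegree_mul_dotProduct_normalizedLaplacian_mulVec hdeg hw]
  exact div_nonneg (Finset.sum_nonneg fun i _ => Finset.sum_nonneg fun j _ =>
    mul_nonneg (hnn i j) (sq_nonneg _)) zero_le_two

theorem exists_rayleigh_le_two_mul_conductance (hdeg : ∀ i, 0 < degree w i) (hw : w.IsSymm)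
    (hnn : ∀ i j, 0 ≤ w i j) {S : Finset ι} (hS : S.Nonempty) (hSc : Sᶜ.Nonempty)
    (hvol : vol w S ≤ vol w Sᶜ) :
    ∃ x : ι → ℝ, sqrtDegree w ⬝ᵥ x = 0 ∧ 0 < x ⬝ᵥ x ∧
      x ⬝ᵥ normalizedLaplacian w *ᵥ x ≤ 2 * conductance w S * (x ⬝ᵥ x) := by
  have hS₀ := vol_pos hdeg hS
  have hSc₀ := vol_pos hdeg hSc
  set a := (vol w S)⁻¹
  set b := (vol w Sᶜ)⁻¹
  have hba : b ≤ a := inv_anti₀ hS₀ hvol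
  set y : ι → ℝ := fun i => if i ∈ S then a else -b
  have ha : a * vol w S = 1 := inv_mul_cancel₀ hS₀.ne'
  have hb : b * vol w Sᶜ = 1 := inv_mul_cancel₀ hSc₀.ne'
  have hdeg₀ := fun i => (hdeg i).le
  have hnorm : (sqrtDegree w * y) ⬝ᵥ (sqrtDegree w * y) = a + b := by
    rw [sqrtDegree_mul_dotProduct hdeg₀]
    simp only [y, ← sq, apply_ite (· ^ 2), sum_degree_mul_ite]
    linear_combination a * ha + b * hb
  refine ⟨sqrtDegree w * y, ?_, by rw [hnorm]; positivity, ?_⟩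
  · simp only [sqrtDegree_dotProduct hdeg₀, y, sum_degree_mul_ite]
    linear_combination ha - hb
  · rw [sqrtDegree_mul_dotProduct_normalizedLaplacian_mulVec hdeg hw, hnorm,
      sum_sum_mul_sq_sub_ite, cut_compl hw, conductance]
    have hgap : 0 ≤ (a + b) * cut w S * (a - b) :=
      mul_nonneg (mul_nonneg (by positivity) (cut_nonneg hnn S)) (sub_nonneg.2 hba)
    rw [div_eq_mul_inv (cut w S)]
    linear_combination hgap

end WeightedGraph

open WeightedGraph in
theorem cheeger_easy_direction (n : ℕ) (hn : 2 ≤ n) (w : Matrix (Fin n) (Fin n) ℝ)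
    (hsym : ∀ i j, w i j = w j i) (hnn : ∀ i j, 0 ≤ w i j)
    (hdeg : ∀ i, 0 < ∑ j, w i j)
    (L : Matrix (Fin n) (Fin n) ℝ)
    (hLdef : L = 1 - Matrix.diagonal (fun i => (∑ j, w i j) ^ (-(1 : ℝ) / 2)) * w *
        Matrix.diagonal (fun i => (∑ j, w i j) ^ (-(1 : ℝ) / 2)))
    (hL : L.IsHermitian)
    (σ : Equiv.Perm (Fin n)) (hmono : Monotone (hL.eigenvalues ∘ σ)) :
    ∀ S : Finset (Fin n), S.Nonempty → S ≠ Finset.univ →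
      (∑ i ∈ S, ∑ j, w i j) ≤ (∑ i, ∑ j, w i j) / 2 →
      hL.eigenvalues (σ ⟨1, by omega⟩) ≤
        2 * ((∑ i ∈ S, ∑ j ∈ Sᶜ, w i j) / (∑ i ∈ S, ∑ j, w i j)) := by
  intro S hS hSu hvol
  have hw : w.IsSymm := IsSymm.ext fun i j => hsym j i
  obtain rfl : L = normalizedLaplacian w := hLdef
  have hsecond : ∀ i ≠ σ ⟨0, by omega⟩, hL.eigenvalues (σ ⟨1, by omega⟩) ≤ hL.eigenvalues i := by
    intro i hi
    have hi₀ : (σ.symm i : ℕ) ≠ 0 := fun h => hi (σ.symm_apply_eq.1 (Fin.ext h))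
    simpa using hmono (show (⟨1, by omega⟩ : Fin n) ≤ σ.symm i from Fin.le_def.2 (by simp; omega))
  have hvol' : vol w S ≤ vol w Sᶜ := by
    simp only [vol, degree]
    linarith [Finset.sum_add_sum_compl S fun i => ∑ j, w i j]
  obtain ⟨x, hx, hxx, hxLx⟩ := exists_rayleigh_le_two_mul_conductance hdeg hw hnn hS
    (by simpa [Finset.nonempty_iff_ne_empty] using hSu) hvol'
  have hpsd := posSemidef_normalizedLaplacian hdeg hw hnn
  have : Nonempty (Fin n) := ⟨⟨0, by omega⟩⟩
  have hrayleigh := hpsd.mul_dotProduct_self_le_of_dotProduct_eq_zero (sqrtDegree_ne_zero hdeg)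
    (normalizedLaplacian_mulVec_sqrtDegree hdeg) hx _ hsecond
  exact le_of_mul_le_mul_right (hrayleigh.trans hxLx) hxx
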